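/- Assume M_nature = ∅ (so p̄_{0,μ} is given for every μ ∈ M and Σ_{0,μ,μ} = (1/p̄_{0,μ}) V* for all μ ∈ M). Then for every μ ∈ M_l and every integer T ≥ 1, the following upper bound holds in the positive semidefinite order: Σ_{T,μ,μ} ⪯ ( ∑_{t=1}^{T} b_{T,t} (∑_{ν∈M_l} J̄_{T,t+1,μ,ν})² / (min_{ν∈M_l} w_{t,ν}) + b_{T,0} / (min_{ν∈M} p̄_{0,ν}) ) · V*. -/

import Mathlib

open Matrix Finset Filter

noncomputable section

/-- In-neighbourhood of `μ` in the directed graph with edge set `E`. -/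
def Nin {K : ℕ} (E : Finset (Fin K × Fin K)) (μ : Fin K) : Finset (Fin K) :=
  Finset.univ.filter (fun ν => (ν, μ) ∈ E)

/-- The set of learning models (those with at least one incoming edge). -/
def Ml {K : ℕ} (E : Finset (Fin K × Fin K)) : Finset (Fin K) :=
  Finset.univ.filter (fun μ => Nin E μ ≠ ∅)

/-- The set of models with no incoming edge (stable data sources). -/
def Mu {K : ℕ} (E : Finset (Fin K × Fin K)) : Finset (Fin K) :=
  Finset.univ.filter (fun μ => Nin E μ = ∅)

/-- The edge relation: `EdgeRel E a b` iff `(a, b) ∈ E`. -/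
def EdgeRel {K : ℕ} (E : Finset (Fin K × Fin K)) : Fin K → Fin K → Prop :=
  fun a b => (a, b) ∈ E

open Classical in
/-- Models in `M_l` not reachable by a directed path from any node of `M_u`. -/
def MlInf {K : ℕ} (E : Finset (Fin K × Fin K)) : Finset (Fin K) :=
  (Ml E).filter (fun μ => ∀ ν ∈ Mu E, ¬ Relation.TransGen (EdgeRel E) ν μ)

open Classical in
/-- Models in `M_l^∞` together with models reachable from some node of `M_l^∞`. -/
def Mlc {K : ℕ} (E : Finset (Fin K × Fin K)) : Finset (Fin K) :=
  (Ml E).filter (fun μ => μ ∈ MlInf E ∨ ∃ ν ∈ MlInf E, Relation.TransGen (EdgeRel E) ν μ)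

/-- The non-collapsing learning models. -/
def Mlnc {K : ℕ} (E : Finset (Fin K × Fin K)) : Finset (Fin K) := Ml E \ Mlc E

/-- The total limiting proportion `w_{t,ν} = ∑_{m ∈ Nin(ν)} p̄_{t,m→ν}`. -/
def wgt {K : ℕ} (E : Finset (Fin K × Fin K)) (pbar : ℕ → Fin K → Fin K → ℝ)
    (t : ℕ) (ν : Fin K) : ℝ :=
  ∑ m ∈ Nin E ν, pbar t m ν

/-- The row-stochastic matrix `P̄_t`: `P̄_{t,μ,ν} = p̄_{t,ν→μ}/w_{t,μ}` if `μ ∈ M_l` and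
`ν ∈ Nin(μ)`, `P̄_{t,μ,μ} = 1` if `μ ∈ M_u`, and `0` otherwise. -/
def Pbar {K : ℕ} (E : Finset (Fin K × Fin K)) (pbar : ℕ → Fin K → Fin K → ℝ)
    (t : ℕ) : Matrix (Fin K) (Fin K) ℝ :=
  Matrix.of fun μ ν =>
    if μ ∈ Ml E then (if ν ∈ Nin E μ then pbar t ν μ / wgt E pbar t μ else 0)
    else (if μ = ν then 1 else 0)

/-- `Jmat P t s = P_t P_{t−1} ⋯ P_s` (equal to `I` when `s = t + 1`). -/
def Jmat {K : ℕ} (P : ℕ → Matrix (Fin K) (Fin K) ℝ) (t s : ℕ) : Matrix (Fin K) (Fin K) ℝ :=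
  ((List.range' s (t + 1 - s)).reverse.map P).prod

/-- The Kronecker product `Q ⊗ I_d`, as a `dK × dK` matrix with blocks indexed by `Fin K`. -/
def kronId {K d : ℕ} (Q : Matrix (Fin K) (Fin K) ℝ) :
    Matrix (Fin K × Fin d) (Fin K × Fin d) ℝ :=
  Matrix.of fun p r => Q p.1 r.1 * (if p.2 = r.2 then 1 else 0)

/-- The block matrix `Σ_0`: `Σ_{0,μ,ν} = (1/p̄_{0,μ}) V*` if `μ = ν ∉ M_nature`, else `0`. -/
def Sigma0 {K d : ℕ} (Mnature : Finset (Fin K)) (p0 : Fin K → ℝ)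
    (Vstar : Matrix (Fin d) (Fin d) ℝ) : Matrix (Fin K × Fin d) (Fin K × Fin d) ℝ :=
  Matrix.of fun p r =>
    if p.1 = r.1 ∧ p.1 ∉ Mnature then (1 / p0 p.1) * Vstar p.2 r.2 else 0

/-- The block matrix `V_t`: `V_{t,μ,ν} = (q_{t,μ∩ν}/(w_{t,μ}w_{t,ν})) V*` if `μ, ν ∈ M_l`,
else `0`. -/
def Vt {K d : ℕ} (E : Finset (Fin K × Fin K)) (pbar : ℕ → Fin K → Fin K → ℝ)
    (q : ℕ → Fin K → Fin K → ℝ) (Vstar : Matrix (Fin d) (Fin d) ℝ) (t : ℕ) :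
    Matrix (Fin K × Fin d) (Fin K × Fin d) ℝ :=
  Matrix.of fun p r =>
    if p.1 ∈ Ml E ∧ r.1 ∈ Ml E then
      (q t p.1 r.1 / (wgt E pbar t p.1 * wgt E pbar t r.1)) * Vstar p.2 r.2
    else 0

end


/-! `Σ_t` keeps the Kronecker form `S_t ⊗ V*`, where the `K × K` matrices `S_t` satisfy
`S_t = b_{t,t-1} P̄_t S_{t-1} P̄_tᵀ + Q_t`, so that
`S_T = ∑_{t=1}^T b_{T,t} J̄_{T,t+1} Q_t J̄_{T,t+1}ᵀ + b_{T,0} J̄_{T,1} S_0 J̄_{T,1}ᵀ`.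
The products `J̄` are row-stochastic, `Q_t` is supported on `M_l × M_l` with entries at most
`1 / min_ν w_{t,ν}` (as `q ≤ w`), and `S_0 = diag(1 / p̄_0)`; bounding each term entrywise
bounds `S_{T,μμ}` by the scalar `s` of the claim, and then
`s V* - Σ_{T,μ,μ} = (s - S_{T,μμ}) V* ⪰ 0`. -/

open scoped Kronecker

section Propagator

variable {K : ℕ}

theorem Jmat_succ_self (P : ℕ → Matrix (Fin K) (Fin K) ℝ) (t : ℕ) : Jmat P t (t + 1) = 1 := by
  simp [Jmat]

theorem Jmat_succ_left (P : ℕ → Matrix (Fin K) (Fin K) ℝ) {t s : ℕ} (h : s ≤ t + 1) :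
    Jmat P (t + 1) s = P (t + 1) * Jmat P t s := by
  unfold Jmat
  rw [show t + 1 + 1 - s = (t + 1 - s) + 1 by omega, List.range'_concat,
    show s + 1 * (t + 1 - s) = t + 1 by omega]
  simp

theorem Jmat_mem {P : ℕ → Matrix (Fin K) (Fin K) ℝ} {S : Submonoid (Matrix (Fin K) (Fin K) ℝ)}
    {t s : ℕ} (hP : ∀ u, s ≤ u → P u ∈ S) : Jmat P t s ∈ S := by
  refine S.list_prod_mem fun A hA => ?_
  obtain ⟨u, hu, rfl⟩ := List.mem_map.1 hA
  exact hP u (List.mem_range'_1.1 (List.mem_reverse.1 hu)).1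

end Propagator

section Unrolling

variable {K : ℕ} (P Q : ℕ → Matrix (Fin K) (Fin K) ℝ) (S₀ : Matrix (Fin K) (Fin K) ℝ)
  (c : ℕ → ℝ)

noncomputable def unrolledCov (T : ℕ) : Matrix (Fin K) (Fin K) ℝ :=
  ∑ t ∈ Icc 1 T, (c T / c t) • (Jmat P T (t + 1) * Q t * (Jmat P T (t + 1))ᵀ)
    + (c T / c 0) • (Jmat P T 1 * S₀ * (Jmat P T 1)ᵀ)

theorem unrolledCov_zero (hc : c 0 ≠ 0) : unrolledCov P Q S₀ c 0 = S₀ := by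
  simp [unrolledCov, Jmat_succ_self P 0, hc]

theorem unrolledCov_succ (hc : ∀ t, c t ≠ 0) (T : ℕ) :
    unrolledCov P Q S₀ c (T + 1) =
      (c (T + 1) / c T) • (P (T + 1) * unrolledCov P Q S₀ c T * (P (T + 1))ᵀ) + Q (T + 1) := by
  have hb : ∀ t, c (T + 1) / c T * (c T / c t) = c (T + 1) / c t := fun t =>
    div_mul_div_cancel₀ (hc T)
  rw [unrolledCov, unrolledCov, ← insert_Icc_right_eq_Icc_add_one (by omega),
    sum_insert (by simp), Jmat_succ_self, Jmat_succ_left P (by omega : 1 ≤ T + 1),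
    sum_congr rfl fun t ht => by rw [Jmat_succ_left P (by simp at ht; omega)]]
  simp only [transpose_mul, Matrix.mul_add, Matrix.add_mul, Matrix.mul_sum, Matrix.sum_mul,
    Matrix.mul_smul, Matrix.smul_mul, smul_add, smul_sum, smul_smul, Matrix.mul_assoc, hb,
    div_self (hc (T + 1)), one_smul, Matrix.one_mul, transpose_one, Matrix.mul_one]
  abel

end Unrolling

theorem kronId_eq_kronecker {K d : ℕ} (A : Matrix (Fin K) (Fin K) ℝ) :
    kronId (d := d) A = A ⊗ₖ 1 := by
  ext p r
  simp [kronId, one_apply]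

theorem kronId_mul_kronecker_mul_kronId_transpose {K d : ℕ} (A S : Matrix (Fin K) (Fin K) ℝ)
    (V : Matrix (Fin d) (Fin d) ℝ) :
    kronId A * (S ⊗ₖ V) * (kronId A)ᵀ = (A * S * Aᵀ) ⊗ₖ V := by
  rw [kronId_eq_kronecker, ← kroneckerMap_transpose, transpose_one, ← mul_kronecker_mul,
    ← mul_kronecker_mul, Matrix.one_mul, Matrix.mul_one]

theorem eq_unrolledCov_kronecker {K d : ℕ} {P Q : ℕ → Matrix (Fin K) (Fin K) ℝ}
    {S₀ : Matrix (Fin K) (Fin K) ℝ} {c : ℕ → ℝ} {V : Matrix (Fin d) (Fin d) ℝ}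
    {Sig : ℕ → Matrix (Fin K × Fin d) (Fin K × Fin d) ℝ} (hc : ∀ t, c t ≠ 0)
    (h0 : Sig 0 = S₀ ⊗ₖ V)
    (hrec : ∀ t, 1 ≤ t →
      Sig t = (c t / c (t - 1)) • (kronId (P t) * Sig (t - 1) * (kronId (P t))ᵀ) + Q t ⊗ₖ V)
    (T : ℕ) : Sig T = unrolledCov P Q S₀ c T ⊗ₖ V := by
  induction T with
  | zero => rw [h0, unrolledCov_zero _ _ _ _ (hc 0)]
  | succ T ih =>
    rw [hrec (T + 1) T.succ_pos, Nat.add_sub_cancel, ih,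
      kronId_mul_kronecker_mul_kronId_transpose, unrolledCov_succ _ _ _ _ hc, add_kronecker,
      smul_kronecker]

theorem Sigma0_empty {K d : ℕ} (p0 : Fin K → ℝ) (V : Matrix (Fin d) (Fin d) ℝ) :
    Sigma0 ∅ p0 V = diagonal (fun μ => 1 / p0 μ) ⊗ₖ V := by
  ext ⟨μ, a⟩ ⟨ν, b⟩
  by_cases h : μ = ν <;> simp [Sigma0, h]

noncomputable def vtCoeff {K : ℕ} (E : Finset (Fin K × Fin K)) (pbar : ℕ → Fin K → Fin K → ℝ)
    (q : ℕ → Fin K → Fin K → ℝ) (t : ℕ) : Matrix (Fin K) (Fin K) ℝ :=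
  of fun μ ν =>
    if μ ∈ Ml E ∧ ν ∈ Ml E then q t μ ν / (wgt E pbar t μ * wgt E pbar t ν) else 0

theorem Vt_eq_kronecker {K d : ℕ} (E : Finset (Fin K × Fin K)) (pbar : ℕ → Fin K → Fin K → ℝ)
    (q : ℕ → Fin K → Fin K → ℝ) (V : Matrix (Fin d) (Fin d) ℝ) (t : ℕ) :
    Vt E pbar q V t = vtCoeff E pbar q t ⊗ₖ V := by
  ext ⟨μ, a⟩ ⟨ν, b⟩
  simp only [Vt, vtCoeff, of_apply, kronecker_apply, ite_mul, zero_mul]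

section DiagonalBounds

variable {n : Type*} [Fintype n] [DecidableEq n]

theorem mul_diagonal_mul_transpose_apply_self_le {J : Matrix n n ℝ}
    (hJ : J ∈ rowStochastic ℝ n) {s : n → ℝ} {B : ℝ} (hs : ∀ j, 0 ≤ s j) (hsB : ∀ j, s j ≤ B)
    (i : n) : (J * diagonal s * Jᵀ) i i ≤ B :=
  calc (J * diagonal s * Jᵀ) i i = ∑ j, J i j * (s j * J i j) := by
        rw [mul_apply]
        simp only [mul_diagonal, transpose_apply, mul_assoc]
    _ ≤ ∑ j, J i j * B := by
        gcongr with j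
        · exact nonneg_of_mem_rowStochastic hJ
        · exact (mul_le_of_le_one_right (hs j) (le_one_of_mem_rowStochastic hJ)).trans (hsB j)
    _ = B := by rw [← sum_mul, sum_row_of_mem_rowStochastic hJ, one_mul]

theorem mul_mul_transpose_apply_self_le {J Q : Matrix n n ℝ} {A : Finset n} {B : ℝ} {i : n}
    (hJ : ∀ j, 0 ≤ J i j) (hQ : ∀ j k, Q j k ≤ if j ∈ A ∧ k ∈ A then B else 0) :
    (J * Q * Jᵀ) i i ≤ (∑ j ∈ A, J i j) ^ 2 * B :=
  calc (J * Q * Jᵀ) i i = ∑ k, ∑ j, J i j * Q j k * J i k := by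
        simp only [mul_apply, transpose_apply, sum_mul]
    _ ≤ ∑ k, ∑ j, J i j * (if j ∈ A ∧ k ∈ A then B else 0) * J i k := by
        gcongr with k _ j _
        · exact hJ k
        · exact hJ j
        · exact hQ j k
    _ = (∑ j ∈ A, J i j) ^ 2 * B := by
        rw [sum_comm]
        simp only [ite_and, ite_mul, mul_ite, mul_zero, zero_mul, sum_ite_irrel, sum_const_zero,
          sum_ite_mem, univ_inter]
        rw [sq, sum_mul_sum, sum_mul]
        refine sum_congr rfl fun j _ => ?_
        rw [sum_mul]
        exact sum_congr rfl fun k _ => by ring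

end DiagonalBounds

theorem unrolledCov_diagonal_apply_self_le {K : ℕ} {P Q : ℕ → Matrix (Fin K) (Fin K) ℝ}
    {s : Fin K → ℝ} {c : ℕ → ℝ} {A : Finset (Fin K)} {B : ℕ → ℝ} {B₀ : ℝ}
    (hP : ∀ t, 1 ≤ t → P t ∈ rowStochastic ℝ (Fin K)) (hc : ∀ t, 0 < c t)
    (hQ : ∀ t, 1 ≤ t → ∀ j k, Q t j k ≤ if j ∈ A ∧ k ∈ A then B t else 0)
    (hs : ∀ j, 0 ≤ s j) (hsB : ∀ j, s j ≤ B₀) (i : Fin K) (T : ℕ) :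
    unrolledCov P Q (diagonal s) c T i i ≤
      ∑ t ∈ Icc 1 T, c T / c t * ((∑ j ∈ A, Jmat P T (t + 1) i j) ^ 2 * B t)
        + c T / c 0 * B₀ := by
  have hJ : ∀ u, 1 ≤ u → Jmat P T u ∈ rowStochastic ℝ (Fin K) := fun u hu =>
    Jmat_mem fun v hv => hP v (hu.trans hv)
  simp only [unrolledCov, Matrix.add_apply, Matrix.sum_apply, Matrix.smul_apply, smul_eq_mul]
  gcongr with t ht
  · exact (div_pos (hc T) (hc t)).le
  · exact mul_mul_transpose_apply_self_le (fun j => nonneg_of_mem_rowStochastic (hJ _ (by omega)))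
      (hQ t (mem_Icc.1 ht).1)
  · exact (div_pos (hc T) (hc 0)).le
  · exact mul_diagonal_mul_transpose_apply_self_le (hJ 1 le_rfl) hs hsB i

section Pbar

variable {K : ℕ} {E : Finset (Fin K × Fin K)} {pbar : ℕ → Fin K → Fin K → ℝ} {t : ℕ}

theorem wgt_pos (hpos : ∀ ν μ, (ν, μ) ∈ E → 0 < pbar t ν μ) {μ : Fin K} (hμ : μ ∈ Ml E) :
    0 < wgt E pbar t μ :=
  sum_pos (fun ν hν => hpos ν μ (mem_filter.1 hν).2)
    (nonempty_iff_ne_empty.2 (mem_filter.1 hμ).2)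

theorem Pbar_mem_rowStochastic (hpos : ∀ ν μ, (ν, μ) ∈ E → 0 < pbar t ν μ) :
    Pbar E pbar t ∈ rowStochastic ℝ (Fin K) := by
  refine mem_rowStochastic_iff_sum.2 ⟨fun μ ν => ?_, fun μ => ?_⟩
  · simp only [Pbar, of_apply]
    split_ifs with hμ hν
    · exact (div_pos (hpos ν μ (mem_filter.1 hν).2) (wgt_pos hpos hμ)).le
    all_goals norm_num
  · by_cases hμ : μ ∈ Ml E
    · simp only [Pbar, of_apply, if_pos hμ, sum_ite_mem, univ_inter, ← sum_div]
      exact div_self (wgt_pos hpos hμ).ne'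
    · simp [Pbar, hμ]

theorem vtCoeff_le {q : ℕ → Fin K → Fin K → ℝ} (hpos : ∀ ν μ, (ν, μ) ∈ E → 0 < pbar t ν μ)
    (hq : ∀ ν₁ ∈ Ml E, ∀ ν₂ ∈ Ml E, q t ν₁ ν₂ ≤ min (wgt E pbar t ν₁) (wgt E pbar t ν₂))
    (hne : (Ml E).Nonempty) (ν₁ ν₂ : Fin K) :
    vtCoeff E pbar q t ν₁ ν₂ ≤
      if ν₁ ∈ Ml E ∧ ν₂ ∈ Ml E then 1 / (Ml E).inf' hne (fun ν => wgt E pbar t ν) else 0 := by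
  simp only [vtCoeff, of_apply]
  split_ifs with h
  · obtain ⟨h₁, h₂⟩ := h
    have hmin : 0 < (Ml E).inf' hne (fun ν => wgt E pbar t ν) :=
      (lt_inf'_iff hne).2 fun ν hν => wgt_pos hpos hν
    rw [div_le_div_iff₀ (mul_pos (wgt_pos hpos h₁) (wgt_pos hpos h₂)) hmin, one_mul]
    exact mul_le_mul ((hq ν₁ h₁ ν₂ h₂).trans (min_le_left _ _)) (inf'_le _ h₂) hmin.le
      (wgt_pos hpos h₁).le
  · rfl

end Pbar

theorem stmt5_general
    {K d : ℕ}
    (E : Finset (Fin K × Fin K))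
    (α : ℝ) (hα0 : 0 < α)
    (Mnature : Finset (Fin K))
    (Vstar : Matrix (Fin d) (Fin d) ℝ) (hVpsd : Vstar.PosSemidef)
    (c : ℕ → ℝ) (hc : ∀ t, 0 < c t)
    (pbar : ℕ → Fin K → Fin K → ℝ)
    (hpbarα : ∀ t, 1 ≤ t → ∀ ν μ : Fin K, (ν, μ) ∈ E → α ≤ pbar t ν μ)
    (p0 : Fin K → ℝ) (hp0α : ∀ μ ∉ Mnature, α ≤ p0 μ)
    (q : ℕ → Fin K → Fin K → ℝ)
    (hqle : ∀ t, 1 ≤ t → ∀ ν₁ ∈ Ml E, ∀ ν₂ ∈ Ml E,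
      q t ν₁ ν₂ ≤ min (wgt E pbar t ν₁) (wgt E pbar t ν₂))
    (Sig : ℕ → Matrix (Fin K × Fin d) (Fin K × Fin d) ℝ)
    (hSig0 : Sig 0 = Sigma0 Mnature p0 Vstar)
    (hSigrec : ∀ t, 1 ≤ t → Sig t =
      (c t / c (t - 1)) • (kronId (Pbar E pbar t) * Sig (t - 1) * (kronId (Pbar E pbar t))ᵀ)
        + Vt E pbar q Vstar t)
    (hMnatEmpty : Mnature = ∅) :
    ∀ (μ : Fin K) (hμ : μ ∈ Ml E), ∀ T : ℕ, 1 ≤ T →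
      (((∑ t ∈ Finset.Icc 1 T,
            (c T / c t) * (∑ ν ∈ Ml E, Jmat (Pbar E pbar) T (t + 1) μ ν) ^ 2 /
              ((Ml E).inf' ⟨μ, hμ⟩ (fun ν => wgt E pbar t ν))) +
          (c T / c 0) / (Finset.univ.inf' ⟨μ, Finset.mem_univ μ⟩ p0)) • Vstar -
        Matrix.of (fun a b : Fin d => Sig T (μ, a) (μ, b))).PosSemidef := by
  intro μ hμ T _
  subst hMnatEmpty
  have hpos : ∀ t, 1 ≤ t → ∀ ν μ, (ν, μ) ∈ E → 0 < pbar t ν μ :=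
    fun t ht ν μ h => hα0.trans_le (hpbarα t ht ν μ h)
  have hp0 : ∀ ν, 0 < p0 ν := fun ν => hα0.trans_le (hp0α ν (notMem_empty ν))
  have hp0min : 0 < univ.inf' ⟨μ, mem_univ μ⟩ p0 := (lt_inf'_iff _).2 fun ν _ => hp0 ν
  set S := unrolledCov (Pbar E pbar) (vtCoeff E pbar q) (diagonal fun ν => 1 / p0 ν) c
  have hSig : Sig T = S T ⊗ₖ Vstar :=
    eq_unrolledCov_kronecker (fun t => (hc t).ne') (hSig0.trans (Sigma0_empty p0 Vstar))
      (fun t ht => (hSigrec t ht).trans (by rw [Vt_eq_kronecker])) T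
  have hbound := unrolledCov_diagonal_apply_self_le
    (fun t ht => Pbar_mem_rowStochastic (hpos t ht)) hc
    (fun t ht => vtCoeff_le (hpos t ht) (hqle t ht) ⟨μ, hμ⟩)
    (fun ν => (one_div_pos.2 (hp0 ν)).le)
    (fun ν => one_div_le_one_div_of_le hp0min (inf'_le _ (mem_univ ν))) μ T
  have hblock : of (fun a b => Sig T (μ, a) (μ, b)) = S T μ μ • Vstar := by
    ext a b
    simp [hSig]
  rw [hblock, ← sub_smul]
  refine hVpsd.smul (sub_nonneg.2 (hbound.trans_eq ?_))
  simp only [mul_one_div, mul_div_assoc]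

/-- When `M_nature = ∅`, for every `μ ∈ M_l` and `T ≥ 1`,
`Σ_{T,μ,μ} ⪯ (∑_{t=1}^T b_{T,t} (∑_{ν∈M_l} J̄_{T,t+1,μ,ν})² / (min_{ν∈M_l} w_{t,ν})
 + b_{T,0} / (min_{ν∈M} p̄_{0,ν})) · V*` in the positive semidefinite order. -/
theorem stmt5
    {K d : ℕ} (hK : 1 ≤ K) (hd : 1 ≤ d)
    (E : Finset (Fin K × Fin K))
    (α ᾱ : ℝ) (hα0 : 0 < α) (hα1 : α ≤ 1) (hᾱ : 1 ≤ ᾱ)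
    (Mnature : Finset (Fin K)) (hMnat : Mnature ⊆ Mu E)
    (Vstar : Matrix (Fin d) (Fin d) ℝ) (hVpsd : Vstar.PosSemidef) (hVtr : 0 < Vstar.trace)
    (c : ℕ → ℝ) (hc : ∀ t, 0 < c t)
    (hb : ∀ t s : ℕ, α ≤ c t / c s ∧ c t / c s ≤ ᾱ)
    (pbar : ℕ → Fin K → Fin K → ℝ)
    (hpbarα : ∀ t, 1 ≤ t → ∀ ν μ : Fin K, (ν, μ) ∈ E → α ≤ pbar t ν μ)
    (hpbarsum : ∀ t, 1 ≤ t → ∑ e ∈ E, pbar t e.1 e.2 ≤ 1)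
    (p0 : Fin K → ℝ) (hp0α : ∀ μ ∉ Mnature, α ≤ p0 μ)
    (hp0sum : ∑ μ ∈ Finset.univ \ Mnature, p0 μ ≤ 1)
    (q : ℕ → Fin K → Fin K → ℝ)
    (hqsymm : ∀ t, 1 ≤ t → ∀ ν₁ ∈ Ml E, ∀ ν₂ ∈ Ml E, q t ν₁ ν₂ = q t ν₂ ν₁)
    (hqnn : ∀ t, 1 ≤ t → ∀ ν₁ ∈ Ml E, ∀ ν₂ ∈ Ml E, 0 ≤ q t ν₁ ν₂)
    (hqle : ∀ t, 1 ≤ t → ∀ ν₁ ∈ Ml E, ∀ ν₂ ∈ Ml E,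
      q t ν₁ ν₂ ≤ min (wgt E pbar t ν₁) (wgt E pbar t ν₂))
    (hqdiag : ∀ t, 1 ≤ t → ∀ ν ∈ Ml E, q t ν ν = wgt E pbar t ν)
    (Sig : ℕ → Matrix (Fin K × Fin d) (Fin K × Fin d) ℝ)
    (hSig0 : Sig 0 = Sigma0 Mnature p0 Vstar)
    (hSigrec : ∀ t, 1 ≤ t → Sig t =
      (c t / c (t - 1)) • (kronId (Pbar E pbar t) * Sig (t - 1) * (kronId (Pbar E pbar t))ᵀ)
        + Vt E pbar q Vstar t)
    (hMnatEmpty : Mnature = ∅) :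
    ∀ (μ : Fin K) (hμ : μ ∈ Ml E), ∀ T : ℕ, 1 ≤ T →
      (((∑ t ∈ Finset.Icc 1 T,
            (c T / c t) * (∑ ν ∈ Ml E, Jmat (Pbar E pbar) T (t + 1) μ ν) ^ 2 /
              ((Ml E).inf' ⟨μ, hμ⟩ (fun ν => wgt E pbar t ν))) +
          (c T / c 0) / (Finset.univ.inf' ⟨μ, Finset.mem_univ μ⟩ p0)) • Vstar -
        Matrix.of (fun a b : Fin d => Sig T (μ, a) (μ, b))).PosSemidef :=
  stmt5_general E α hα0 Mnature Vstar hVpsd c hc pbar hpbarα p0 hp0α q hqle Sig hSig0 hSigrec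
    hMnatEmpty
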